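/- Let n, p, q be positive integers with 2n ≤ p and 2n ≤ q. Suppose A, A' are complex p×n matrices of rank n and B, B' are complex q×n matrices of rank n, with A·Bᵀ = A'·B'ᵀ. Then there exists an invertible n×n complex matrix g such that A'ᵀA' = gᵀ·(AᵀA)·g and B'ᵀB' = g⁻¹·(BᵀB)·(g⁻¹)ᵀ. (Thus φ maps the fiber φ'⁻¹(x') onto a single GL(n,ℂ)-orbit in image of the other moment map: φ(φ'⁻¹(𝒪')) = 𝒪.) -/

import Mathlib

/-!
Over a field, a matrix of full column rank has a left inverse, and two factorizations
`A * Bᵀ = A' * B'ᵀ` through full-column-rank factors differ by an invertible `g`: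
`A' = A * g` and `B' = B * (g⁻¹)ᵀ`, with `g = Bᵀ * M'ᵀ` for a left inverse `M'` of `B'`
(multiply the identity on the right by `M'ᵀ`); it is invertible because the same construction
with the roles swapped gives a right inverse. The claimed identities for `φ(A', B')` then follow by
substitution.
-/

open Matrix

namespace Matrix

theorem exists_mul_eq_one_of_rank_eq_card {K m n : Type*} [Field K] [Fintype m] [Fintype n]
    [DecidableEq n] {A : Matrix m n K} (hA : A.rank = Fintype.card n) :
    ∃ L : Matrix n m K, L * A = 1 := by
  classical
  have hker : LinearMap.ker A.mulVecLin = ⊥ := by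
    have := LinearMap.finrank_range_add_finrank_ker A.mulVecLin
    rw [← Matrix.rank, hA, Module.finrank_fintype_fun_eq_card] at this
    exact Submodule.finrank_eq_zero.mp (by omega)
  obtain ⟨g, hg⟩ := A.mulVecLin.exists_leftInverse_of_injective hker
  refine ⟨LinearMap.toMatrix' g, ?_⟩
  rw [← LinearMap.toMatrix'_toLin' A, ← LinearMap.toMatrix'_comp, Matrix.toLin'_apply', hg,
    LinearMap.toMatrix'_id]

section Factorization

variable {R m k n : Type*} [CommRing R] [Fintype n] [DecidableEq n] [Fintype k]
  {A A' : Matrix m n R} {B B' : Matrix k n R}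

theorem eq_mul_of_mul_transpose_eq {L' : Matrix n k R} (h : A * Bᵀ = A' * B'ᵀ)
    (hB' : L' * B' = 1) : A' = A * (Bᵀ * L'ᵀ) := by
  calc A' = A' * (L' * B')ᵀ := by rw [hB', transpose_one, Matrix.mul_one]
    _ = A * (Bᵀ * L'ᵀ) := by rw [transpose_mul, ← Matrix.mul_assoc, ← h, Matrix.mul_assoc]

theorem exists_isUnit_of_mul_transpose_eq [Fintype m] {L : Matrix n m R} {M M' : Matrix n k R}
    (hA : L * A = 1) (hB : M * B = 1) (hB' : M' * B' = 1) (h : A * Bᵀ = A' * B'ᵀ) :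
    ∃ g : Matrix n n R, IsUnit g ∧ A' = A * g ∧ B' = B * (g⁻¹)ᵀ := by
  set g := Bᵀ * M'ᵀ
  have hA' : A' = A * g := eq_mul_of_mul_transpose_eq h hB'
  have hg_right : g * (B'ᵀ * Mᵀ) = 1 := by
    calc g * (B'ᵀ * Mᵀ) = L * (A * g * (B'ᵀ * Mᵀ)) := by
          rw [← Matrix.mul_assoc L, ← Matrix.mul_assoc L, hA, Matrix.one_mul, Matrix.mul_assoc]
      _ = L * A := by rw [← hA', ← eq_mul_of_mul_transpose_eq h.symm hB]
      _ = 1 := hA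
  have hBt : Bᵀ = g * B'ᵀ := by
    calc Bᵀ = L * (A * Bᵀ) := by rw [← Matrix.mul_assoc, hA, Matrix.one_mul]
      _ = g * B'ᵀ := by rw [h, hA', ← Matrix.mul_assoc, ← Matrix.mul_assoc, hA, Matrix.one_mul]
  have hg_inv : g⁻¹ * g = 1 := Matrix.nonsing_inv_mul g (isUnit_det_of_right_inverse hg_right)
  refine ⟨g, (isUnit_iff_isUnit_det g).mpr (isUnit_det_of_right_inverse hg_right), hA', ?_⟩
  rw [← transpose_transpose B', ← transpose_transpose B, ← transpose_mul, hBt,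
    ← Matrix.mul_assoc, hg_inv, Matrix.one_mul]

end Factorization

end Matrix

theorem stmt_3_general (n p q : ℕ)
    (A A' : Matrix (Fin p) (Fin n) ℂ) (B B' : Matrix (Fin q) (Fin n) ℂ)
    (hA : A.rank = n) (hB : B.rank = n) (hB' : B'.rank = n)
    (h : A * Bᵀ = A' * B'ᵀ) :
    ∃ g : Matrix (Fin n) (Fin n) ℂ, IsUnit g ∧
      A'ᵀ * A' = gᵀ * (Aᵀ * A) * g ∧
      B'ᵀ * B' = g⁻¹ * (Bᵀ * B) * (g⁻¹)ᵀ := by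
  obtain ⟨L, hL⟩ := exists_mul_eq_one_of_rank_eq_card (A := A) (by rwa [Fintype.card_fin])
  obtain ⟨M, hM⟩ := exists_mul_eq_one_of_rank_eq_card (A := B) (by rwa [Fintype.card_fin])
  obtain ⟨M', hM'⟩ := exists_mul_eq_one_of_rank_eq_card (A := B') (by rwa [Fintype.card_fin])
  obtain ⟨g, hg, rfl, rfl⟩ := exists_isUnit_of_mul_transpose_eq hL hM hM' h
  refine ⟨g, hg, ?_, ?_⟩ <;> simp only [transpose_mul, transpose_transpose, Matrix.mul_assoc]

/-- Theorem B.3(ii) for the dual pair (Sp(2n,ℝ), O(p,q)):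
φ maps the fiber φ'⁻¹(x') onto a single GL(n,ℂ)-orbit, where GL(n,ℂ)
acts on the target of φ by g·(S,T) = (gᵀSg, g⁻¹T(g⁻¹)ᵀ). -/
theorem stmt_3 (n p q : ℕ) (hn : 0 < n) (hp : 0 < p) (hq : 0 < q)
    (hnp : 2 * n ≤ p) (hnq : 2 * n ≤ q)
    (A A' : Matrix (Fin p) (Fin n) ℂ) (B B' : Matrix (Fin q) (Fin n) ℂ)
    (hA : A.rank = n) (hA' : A'.rank = n) (hB : B.rank = n) (hB' : B'.rank = n)
    (h : A * Bᵀ = A' * B'ᵀ) :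
    ∃ g : Matrix (Fin n) (Fin n) ℂ, IsUnit g ∧
      A'ᵀ * A' = gᵀ * (Aᵀ * A) * g ∧
      B'ᵀ * B' = g⁻¹ * (Bᵀ * B) * (g⁻¹)ᵀ :=
  stmt_3_general n p q A A' B B' hA hB hB' h
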